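/- Let ((x'_k),(w_k)) be an O-frame for T ∈ L(X,W). Then for every x'' ∈ X** and w' ∈ W*, the sequence of partial sums ∑_{k=1}^N ⟨w', w_k⟩ ⟨x'', x'_k⟩ is bounded; consequently the sequence (∑_{k=1}^N ⟨x'', x'_k⟩ w_k)_N is norm-bounded in W. -/

import Mathlib

/- The partial-sum operators `S_N = ∑_{k<N} x'_k ⊗ w_k : X → W` converge pointwise
to `T`, so by the uniform boundedness principle `sup_N ‖S_N‖ < ∞`. The double pairing equals
`x''(w' ∘ S_N)` and is therefore bounded by `‖x''‖ ‖w'‖ sup_N ‖S_N‖`. This says that the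
sequence `∑_{k<N} x''(x'_k) w_k` is weakly bounded in `W`; embedding `W` isometrically into its
bidual and applying the uniform boundedness principle on the Banach space `W*` makes it norm
bounded. -/

open Filter Topology

/-- O-frame: for every x, the series converges in norm to T x. -/
def IsOFrame {X W : Type*} [NormedAddCommGroup X] [NormedSpace ℝ X]
    [NormedAddCommGroup W] [NormedSpace ℝ W]
    (T : X →L[ℝ] W) (x' : ℕ → (X →L[ℝ] ℝ)) (w : ℕ → W) : Prop :=
  ∀ x : X, Tendsto (fun N => ∑ k ∈ Finset.range N, x' k x • w k) atTop (𝓝 (T x))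

theorem exists_norm_le_of_forall_exists_norm_dual_le {𝕜 E ι : Type*} [RCLike 𝕜]
    [NormedAddCommGroup E] [NormedSpace 𝕜 E] {u : ι → E}
    (h : ∀ f : StrongDual 𝕜 E, ∃ M, ∀ i, ‖f (u i)‖ ≤ M) : ∃ M, ∀ i, ‖u i‖ ≤ M := by
  obtain ⟨M, hM⟩ :=
    banach_steinhaus (g := fun i => NormedSpace.inclusionInDoubleDual 𝕜 E (u i)) h
  exact ⟨M, fun i => (NormedSpace.inclusionInDoubleDualLi 𝕜).norm_map (u i) ▸ hM i⟩

section PartialSums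

variable {X W : Type*} [NormedAddCommGroup X] [NormedSpace ℝ X]
  [NormedAddCommGroup W] [NormedSpace ℝ W]

def partialSumOp (x' : ℕ → StrongDual ℝ X) (w : ℕ → W) (N : ℕ) : X →L[ℝ] W :=
  ∑ k ∈ Finset.range N, (x' k).smulRight (w k)

theorem partialSumOp_apply (x' : ℕ → StrongDual ℝ X) (w : ℕ → W) (N : ℕ) (x : X) :
    partialSumOp x' w N x = ∑ k ∈ Finset.range N, x' k x • w k := by
  simp [partialSumOp]

theorem apply_comp_partialSumOp (x' : ℕ → StrongDual ℝ X) (w : ℕ → W)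
    (x'' : StrongDual ℝ (StrongDual ℝ X)) (w' : StrongDual ℝ W) (N : ℕ) :
    x'' (w'.comp (partialSumOp x' w N)) = ∑ k ∈ Finset.range N, w' (w k) * x'' (x' k) := by
  have hcomp : w'.comp (partialSumOp x' w N) = ∑ k ∈ Finset.range N, w' (w k) • x' k := by
    ext x
    simp [partialSumOp_apply, mul_comm]
  simp [hcomp]

theorem IsOFrame.exists_norm_partialSumOp_le [CompleteSpace X] {T : X →L[ℝ] W}
    {x' : ℕ → StrongDual ℝ X} {w : ℕ → W} (hF : IsOFrame T x' w) :
    ∃ C, ∀ N, ‖partialSumOp x' w N‖ ≤ C := by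
  refine banach_steinhaus fun x => ?_
  obtain ⟨C, hC⟩ := (hF x).norm.bddAbove_range
  exact ⟨C, fun N => by simpa [partialSumOp_apply] using hC (Set.mem_range_self N)⟩

theorem IsOFrame.exists_abs_sum_dual_mul_bidual_le [CompleteSpace X] {T : X →L[ℝ] W}
    {x' : ℕ → StrongDual ℝ X} {w : ℕ → W} (hF : IsOFrame T x' w)
    (x'' : StrongDual ℝ (StrongDual ℝ X)) (w' : StrongDual ℝ W) :
    ∃ M, ∀ N, |∑ k ∈ Finset.range N, w' (w k) * x'' (x' k)| ≤ M := by
  obtain ⟨C, hC⟩ := hF.exists_norm_partialSumOp_le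
  refine ⟨‖x''‖ * (‖w'‖ * C), fun N => ?_⟩
  rw [← apply_comp_partialSumOp, ← Real.norm_eq_abs]
  calc ‖x'' (w'.comp (partialSumOp x' w N))‖
      ≤ ‖x''‖ * ‖w'.comp (partialSumOp x' w N)‖ := x''.le_opNorm _
    _ ≤ ‖x''‖ * (‖w'‖ * ‖partialSumOp x' w N‖) := by gcongr; exact w'.opNorm_comp_le _
    _ ≤ ‖x''‖ * (‖w'‖ * C) := by gcongr; exact hC N

end PartialSums

theorem oframe_partialSums_bounded_general {X W : Type*}
    [NormedAddCommGroup X] [NormedSpace ℝ X] [CompleteSpace X]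
    [NormedAddCommGroup W] [NormedSpace ℝ W]
    (T : X →L[ℝ] W) (x' : ℕ → (X →L[ℝ] ℝ)) (w : ℕ → W)
    (hF : IsOFrame T x' w) :
    (∀ (x'' : (X →L[ℝ] ℝ) →L[ℝ] ℝ) (w' : W →L[ℝ] ℝ),
        ∃ M : ℝ, ∀ N, |∑ k ∈ Finset.range N, w' (w k) * x'' (x' k)| ≤ M) ∧
    (∀ x'' : (X →L[ℝ] ℝ) →L[ℝ] ℝ,
        ∃ M : ℝ, ∀ N, ‖∑ k ∈ Finset.range N, x'' (x' k) • w k‖ ≤ M) := by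
  refine ⟨hF.exists_abs_sum_dual_mul_bidual_le, fun x'' => ?_⟩
  refine exists_norm_le_of_forall_exists_norm_dual_le (𝕜 := ℝ) fun w' => ?_
  obtain ⟨M, hM⟩ := hF.exists_abs_sum_dual_mul_bidual_le x'' w'
  refine ⟨M, fun N => ?_⟩
  simpa [map_sum, mul_comm] using hM N

/-- For an O-frame, the doubly-paired partial sums are bounded, and consequently
the partial sums ∑_{k<N} ⟨x'', x'_k⟩ w_k are norm-bounded in W. -/
theorem oframe_partialSums_bounded {X W : Type*}
    [NormedAddCommGroup X] [NormedSpace ℝ X] [CompleteSpace X]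
    [NormedAddCommGroup W] [NormedSpace ℝ W] [CompleteSpace W]
    (T : X →L[ℝ] W) (x' : ℕ → (X →L[ℝ] ℝ)) (w : ℕ → W)
    (hF : IsOFrame T x' w) :
    (∀ (x'' : (X →L[ℝ] ℝ) →L[ℝ] ℝ) (w' : W →L[ℝ] ℝ),
        ∃ M : ℝ, ∀ N, |∑ k ∈ Finset.range N, w' (w k) * x'' (x' k)| ≤ M) ∧
    (∀ x'' : (X →L[ℝ] ℝ) →L[ℝ] ℝ,
        ∃ M : ℝ, ∀ N, ‖∑ k ∈ Finset.range N, x'' (x' k) • w k‖ ≤ M) :=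
  oframe_partialSums_bounded_general T x' w hF
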